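/- arXiv:1203.5804 — 5 statements merged into one kernel-verified Lean document; each statement's English description precedes it below -/
import Mathlib

section
/- Let $q$ be a prime power and $n \geq 1$. The number of $n \times n$ matrices over $\mathbf{F}_q$ of rank exactly $1$ with all diagonal entries equal to zero is $\frac{1}{q-1}\left((2q-1)^n - 2q^n + 1\right)$. -/
open Matrix

section Aux

variable {n : ℕ} {F : Type*} [Field F]

theorem rank_vmv {u v : Fin n → F} (hu : u ≠ 0) (hv : v ≠ 0) :
    (vecMulVec u v).rank = 1 := by
  have h1 : (vecMulVec u v).rank ≤ 1 := by
    rw [vecMulVec_eq Unit]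
    exact (rank_mul_le_left _ _).trans ((rank_le_card_width _).trans (by simp))
  have h0 : (vecMulVec u v).rank ≠ 0 := by
    intro h
    obtain ⟨i, hi⟩ := Function.ne_iff.mp hu
    obtain ⟨j, hj⟩ := Function.ne_iff.mp hv
    have hne : vecMulVec u v ≠ 0 := by
      intro h0
      have := congrFun (congrFun h0 i) j
      simp [vecMulVec_apply] at this
      tauto
    apply hne
    rw [Matrix.rank] at h
    have hbot : LinearMap.range (vecMulVec u v).mulVecLin = ⊥ :=
      Submodule.finrank_eq_zero.mp h
    ext i' j'
    have hmem : (vecMulVec u v).mulVec (Pi.single j' 1) ∈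
        LinearMap.range (vecMulVec u v).mulVecLin := ⟨Pi.single j' 1, rfl⟩
    rw [hbot, Submodule.mem_bot] at hmem
    have := congrFun hmem i'
    simpa [Matrix.mulVec_single] using this
  omega

theorem vmv_decomp {A : Matrix (Fin n) (Fin n) F} (hA : A.rank = 1) :
    ∃ u v : Fin n → F, u ≠ 0 ∧ v ≠ 0 ∧ A = vecMulVec u v := by
  have hA' := hA
  rw [Matrix.rank] at hA
  obtain ⟨⟨u, hu⟩, hu0, hspan⟩ := finrank_eq_one_iff'.mp hA
  have hune : u ≠ 0 := by
    intro h; apply hu0; ext; simp [h]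
  choose c hc using fun j => hspan ⟨A.mulVec (Pi.single j 1), ⟨Pi.single j 1, rfl⟩⟩
  refine ⟨u, c, hune, ?_, ?_⟩
  · intro hc0
    have hA0 : A = 0 := by
      ext i j
      have := congrArg Subtype.val (hc j)
      have h2 := congrFun this i
      simp [Matrix.mulVec_single] at h2
      rw [congrFun hc0 j] at h2
      simpa using h2.symm
    rw [hA0] at hA'; simp at hA'
  · ext i j
    have := congrFun (congrArg Subtype.val (hc j)) i
    simp [Matrix.mulVec_single] at this
    rw [vecMulVec_apply, ← this]
    ring

theorem vmv_unique {u v u' v' : Fin n → F} (hu : u ≠ 0) (hv : v ≠ 0)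
    (hu' : u' ≠ 0) (hv' : v' ≠ 0) (h : vecMulVec u v = vecMulVec u' v') :
    ∃ c : Fˣ, u' = (c : F) • u ∧ v' = ((c⁻¹ : Fˣ) : F) • v := by
  have hij : ∀ i j, u i * v j = u' i * v' j := fun i j => by
    have := congrFun (congrFun h i) j
    simpa [vecMulVec_apply] using this
  obtain ⟨i₀, hi₀⟩ := Function.ne_iff.mp hu'
  obtain ⟨j₀, hj₀⟩ := Function.ne_iff.mp hv
  obtain ⟨j₁, hj₁⟩ := Function.ne_iff.mp hv'
  simp only [Pi.zero_apply] at hi₀ hj₀ hj₁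
  have hui₀ : u i₀ ≠ 0 := by
    intro h0
    have := hij i₀ j₁
    rw [h0, zero_mul] at this
    exact mul_ne_zero hi₀ hj₁ this.symm
  have hvj₀' : v' j₀ ≠ 0 := by
    intro h0
    have := hij i₀ j₀
    rw [h0, mul_zero] at this
    exact mul_ne_zero hui₀ hj₀ this
  have hc : u' i₀ / u i₀ ≠ 0 := div_ne_zero hi₀ hui₀
  refine ⟨Units.mk0 _ hc, ?_, ?_⟩
  · funext i
    have e1 := hij i j₀
    have e2 := hij i₀ j₀
    have key : u' i * u i₀ = u' i₀ * u i := by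
      apply mul_right_cancel₀ hvj₀'
      calc u' i * u i₀ * v' j₀ = u i₀ * (u' i * v' j₀) := by ring
        _ = u i₀ * (u i * v j₀) := by rw [← e1]
        _ = u i * (u i₀ * v j₀) := by ring
        _ = u i * (u' i₀ * v' j₀) := by rw [e2]
        _ = u' i₀ * u i * v' j₀ := by ring
    simp only [Units.val_mk0, Pi.smul_apply, smul_eq_mul]
    rw [div_mul_eq_mul_div, eq_div_iff hui₀]
    linear_combination key
  · funext j
    have e2 := hij i₀ j
    simp only [Pi.smul_apply, smul_eq_mul, ← Units.val_inv_eq_inv_val, Units.val_mk0]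
    rw [Units.val_inv_eq_inv_val, Units.val_mk0]
    rw [eq_comm, inv_div]
    rw [div_mul_eq_mul_div, div_eq_iff hi₀]
    calc u i₀ * v j = u' i₀ * v' j := e2
      _ = v' j * u' i₀ := by ring

end Aux

section Count

variable (n : ℕ) (F : Type*) [Field F]

abbrev Sp := {p : (Fin n → F) × (Fin n → F) // p.1 ≠ 0 ∧ p.2 ≠ 0 ∧ ∀ i, p.1 i * p.2 i = 0}

abbrev Mt := {A : Matrix (Fin n) (Fin n) F // A.rank = 1 ∧ ∀ i, A i i = 0}

noncomputable def fmap : Sp n F → Mt n F := fun p =>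
  ⟨vecMulVec p.1.1 p.1.2, rank_vmv p.2.1 p.2.2.1,
    fun i => by simpa [vecMulVec_apply] using p.2.2.2 i⟩

variable [Fintype F]

theorem fiber_card (A : Mt n F) :
    Nat.card {p : Sp n F // fmap n F p = A} = Fintype.card F - 1 := by
  classical
  obtain ⟨u₀, v₀, hu₀, hv₀, hA⟩ := vmv_decomp A.2.1
  have hdiag : ∀ i, u₀ i * v₀ i = 0 := fun i => by
    have := A.2.2 i
    rw [hA] at this
    simpa [vecMulVec_apply] using this
  have hcu : ∀ (c : Fˣ), (c : F) • u₀ ≠ 0 := fun c => smul_ne_zero c.ne_zero hu₀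
  let g : Fˣ → {p : Sp n F // fmap n F p = A} := fun c =>
    ⟨⟨((c : F) • u₀, ((c⁻¹ : Fˣ) : F) • v₀),
      hcu c, smul_ne_zero (c⁻¹).ne_zero hv₀,
      fun i => by
        simp only [Pi.smul_apply, smul_eq_mul]
        calc (c : F) * u₀ i * (((c⁻¹ : Fˣ) : F) * v₀ i)
            = ((c : F) * ((c⁻¹ : Fˣ) : F)) * (u₀ i * v₀ i) := by ring
          _ = 0 := by rw [hdiag i, mul_zero]⟩,
      by
        apply Subtype.ext
        show vecMulVec _ _ = A.1
        rw [hA]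
        ext i j
        simp only [vecMulVec_apply, Pi.smul_apply, smul_eq_mul]
        calc (c : F) * u₀ i * (((c⁻¹ : Fˣ) : F) * v₀ j)
            = ((c : F) * ((c⁻¹ : Fˣ) : F)) * (u₀ i * v₀ j) := by ring
          _ = u₀ i * v₀ j := by
              rw [show ((c : F) * ((c⁻¹ : Fˣ) : F)) = 1 by
                rw [← Units.val_mul, mul_inv_cancel, Units.val_one], one_mul]⟩
  have hbij : Function.Bijective g := by
    constructor
    · intro c c' hcc
      have h1 : (c : F) • u₀ = (c' : F) • u₀ := by
        have := congrArg (fun x => x.1.1.1) hcc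
        exact this
      obtain ⟨i, hi⟩ := Function.ne_iff.mp hu₀
      simp only [Pi.zero_apply] at hi
      have := congrFun h1 i
      simp only [Pi.smul_apply, smul_eq_mul] at this
      exact Units.ext (mul_right_cancel₀ hi this)
    · rintro ⟨⟨⟨u, v⟩, hu, hv, hp⟩, hfp⟩
      have hmat : vecMulVec u₀ v₀ = vecMulVec u v := by
        have := congrArg Subtype.val hfp
        simp only [fmap] at this
        rw [hA] at this
        exact this.symm
      obtain ⟨c, hcu', hcv'⟩ := vmv_unique hu₀ hv₀ hu hv hmat
      refine ⟨c, ?_⟩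
      apply Subtype.ext
      apply Subtype.ext
      exact Prod.ext hcu'.symm hcv'.symm
  rw [Nat.card_congr (Equiv.ofBijective g hbij).symm, Nat.card_eq_fintype_card,
    Fintype.card_units]

theorem cardSp : Nat.card (Sp n F) = (Fintype.card F - 1) * Nat.card (Mt n F) := by
  classical
  rw [Nat.card_eq_fintype_card,
    Fintype.card_congr (Equiv.sigmaFiberEquiv (fmap n F)).symm, Fintype.card_sigma]
  rw [Finset.sum_congr rfl (fun A _ => by
    rw [← Nat.card_eq_fintype_card, fiber_card n F A])]
  rw [Finset.sum_const, Finset.card_univ, smul_eq_mul, Nat.card_eq_fintype_card, mul_comm]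

end Count

section Final

variable (n : ℕ) (F : Type*) [Field F] [Fintype F]

theorem card_pairzero : Nat.card {x : F × F // x.1 * x.2 = 0} = 2 * Fintype.card F - 1 := by
  classical
  rw [Nat.card_eq_fintype_card]
  have e0 : {x : F × F // x.1 * x.2 = 0} ≃ {x : F × F // x.1 = 0 ∨ x.2 = 0} :=
    Equiv.subtypeEquivRight (fun x => mul_eq_zero)
  have e1 : {x : F × F // x.1 = 0 ∨ x.2 = 0} ≃
      {y : {x : F × F // x.1 = 0 ∨ x.2 = 0} // y.1.1 = 0} ⊕
      {y : {x : F × F // x.1 = 0 ∨ x.2 = 0} // ¬ y.1.1 = 0} :=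
    (Equiv.sumCompl _).symm
  have eD1 : {y : {x : F × F // x.1 = 0 ∨ x.2 = 0} // y.1.1 = 0} ≃ F :=
    { toFun := fun y => y.1.1.2
      invFun := fun b => ⟨⟨(0, b), Or.inl rfl⟩, rfl⟩
      left_inv := by rintro ⟨⟨⟨a, b⟩, hor⟩, (h : a = 0)⟩; subst h; rfl
      right_inv := fun b => rfl }
  have eD2 : {y : {x : F × F // x.1 = 0 ∨ x.2 = 0} // ¬ y.1.1 = 0} ≃ {a : F // a ≠ 0} :=
    { toFun := fun y => ⟨y.1.1.1, y.2⟩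
      invFun := fun a => ⟨⟨(a.1, 0), Or.inr rfl⟩, a.2⟩
      left_inv := by
        rintro ⟨⟨⟨a, b⟩, hor⟩, h⟩
        have hb : b = 0 := hor.resolve_left h
        subst hb; rfl
      right_inv := fun a => rfl }
  have hne : Fintype.card {a : F // a ≠ 0} = Fintype.card F - 1 := by
    rw [← Fintype.card_units]
    exact Fintype.card_congr unitsEquivNeZero.symm
  have hq1 : 1 ≤ Fintype.card F := Fintype.card_pos
  rw [Fintype.card_congr (e0.trans e1), Fintype.card_sum, Fintype.card_congr eD1,
    Fintype.card_congr eD2, hne]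
  omega

end Final

theorem stmt_1 (n q : ℕ) (hn : 1 ≤ n)
    (F : Type*) [Field F] [Fintype F] (hq : Fintype.card F = q) :
    (q - 1) * Nat.card {A : Matrix (Fin n) (Fin n) F //
        A.rank = 1 ∧ ∀ i, A i i = 0} + 2 * q ^ n = (2 * q - 1) ^ n + 1 := by
  classical
  have hq1 : 1 ≤ q := hq ▸ Fintype.card_pos
  -- the type T of pairs with pointwise product zero
  have eT : {p : (Fin n → F) × (Fin n → F) // ∀ i, p.1 i * p.2 i = 0} ≃
      ∀ _i : Fin n, {x : F × F // x.1 * x.2 = 0} :=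
    { toFun := fun p i => ⟨(p.1.1 i, p.1.2 i), p.2 i⟩
      invFun := fun g => ⟨(fun i => (g i).1.1, fun i => (g i).1.2), fun i => (g i).2⟩
      left_inv := by rintro ⟨⟨a, b⟩, h⟩; rfl
      right_inv := fun g => rfl }
  have hT : Fintype.card {p : (Fin n → F) × (Fin n → F) // ∀ i, p.1 i * p.2 i = 0} =
      (2 * q - 1) ^ n := by
    rw [Fintype.card_congr eT, Fintype.card_pi]
    rw [Finset.prod_const, Finset.card_univ, Fintype.card_fin]
    congr 1
    rw [← Nat.card_eq_fintype_card, card_pairzero, hq]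
  -- split T into three pieces
  set T := {p : (Fin n → F) × (Fin n → F) // ∀ i, p.1 i * p.2 i = 0} with hTdef
  have e0 : T ≃ {p : T // p.1.1 = 0} ⊕ {p : T // ¬ p.1.1 = 0} := (Equiv.sumCompl _).symm
  have e1 : {p : T // ¬ p.1.1 = 0} ≃
      {x : {p : T // ¬ p.1.1 = 0} // x.1.1.2 = 0} ⊕
      {x : {p : T // ¬ p.1.1 = 0} // ¬ x.1.1.2 = 0} := (Equiv.sumCompl _).symm
  have eA : {p : T // p.1.1 = 0} ≃ (Fin n → F) :=
    { toFun := fun p => p.1.1.2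
      invFun := fun v => ⟨⟨(0, v), fun i => by simp⟩, rfl⟩
      left_inv := by rintro ⟨⟨⟨a, b⟩, hab⟩, (h : a = 0)⟩; subst h; rfl
      right_inv := fun v => rfl }
  have eB : {x : {p : T // ¬ p.1.1 = 0} // x.1.1.2 = 0} ≃ {u : Fin n → F // u ≠ 0} :=
    { toFun := fun x => ⟨x.1.1.1.1, x.1.2⟩
      invFun := fun u => ⟨⟨⟨(u.1, 0), fun i => by simp⟩, u.2⟩, rfl⟩
      left_inv := by rintro ⟨⟨⟨⟨a, b⟩, hab⟩, ha⟩, (hb : b = 0)⟩; subst hb; rfl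
      right_inv := fun u => rfl }
  have eC : {x : {p : T // ¬ p.1.1 = 0} // ¬ x.1.1.2 = 0} ≃ Sp n F :=
    { toFun := fun x => ⟨x.1.1.1, x.1.2, x.2, x.1.1.2⟩
      invFun := fun s => ⟨⟨⟨s.1, s.2.2.2⟩, s.2.1⟩, s.2.2.1⟩
      left_inv := by rintro ⟨⟨⟨p, hp⟩, h1⟩, h2⟩; rfl
      right_inv := by rintro ⟨p, h1, h2, h3⟩; rfl }
  have hsplit : Fintype.card T =
      q ^ n + (Fintype.card {u : Fin n → F // u ≠ 0} + Fintype.card (Sp n F)) := by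
    rw [Fintype.card_congr e0, Fintype.card_sum, Fintype.card_congr eA,
      Fintype.card_congr (e1.trans (Equiv.sumCongr eB eC)), Fintype.card_sum]
    congr 1
    simp [hq]
  have hufn : Fintype.card {u : Fin n → F // u ≠ 0} + 1 = q ^ n := by
    have := Fintype.card_subtype_compl (fun u : Fin n → F => u = 0)
    rw [Fintype.card_subtype_eq (0 : Fin n → F)] at this
    have hcard : Fintype.card (Fin n → F) = q ^ n := by simp [hq]
    rw [this, hcard]
    have : 1 ≤ q ^ n := Nat.one_le_pow _ _ hq1
    omega
  have hS : Nat.card (Sp n F) = (q - 1) *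
      Nat.card {A : Matrix (Fin n) (Fin n) F // A.rank = 1 ∧ ∀ i, A i i = 0} := by
    rw [cardSp, hq]
  rw [Nat.card_eq_fintype_card] at hS
  have key : Fintype.card (Sp n F) + 2 * q ^ n = (2 * q - 1) ^ n + 1 := by
    rw [← hT, hsplit]
    linarith [hufn]
  calc (q - 1) * Nat.card {A : Matrix (Fin n) (Fin n) F //
        A.rank = 1 ∧ ∀ i, A i i = 0} + 2 * q ^ n
      = Fintype.card (Sp n F) + 2 * q ^ n := by rw [hS]
    _ = (2 * q - 1) ^ n + 1 := key
end

section
/- Let $M$ be an $m \times n$ matrix over $\mathbf{F}_q$ of rank $r$ with columns $v_1, \ldots, v_n$, and suppose the submatrix formed by the last $k$ columns $v_{n-k+1}, \ldots, v_n$ has rank $r'$. Then the number of tuples $(w_1, \ldots, w_{n-k}) \in \mathbf{F}_q^{n-k}$ such that appending the row $(w_1, \ldots, w_{n-k}, 0, \ldots, 0)$ (with $k$ trailing zeros) to $M$ yields a matrix of rank $r$ is exactly $q^{r - r'}$; for the remaining $q^{n-k} - q^{r-r'}$ tuples, the augmented matrix has rank $r+1$. -/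
/-!
Appending a row `v` to `M` keeps the rank when `v` lies in the row space `R` of `M` and raises it
by one otherwise. The zero-padded vectors `(w, 0)` in `R` are the kernel of the projection of `R`
onto the last `k` coordinates, whose image is the row space of the last `k` columns; by
rank–nullity this kernel has dimension `r - r'`, so it has `q ^ (r - r')` elements.
-/

open Module Submodule

namespace Matrix

variable {F : Type*} [Field F] {m : ℕ} {n : Type*}

theorem range_row_of_snoc {α : Type*} (M : Matrix (Fin m) n α) (v : n → α) :
    Set.range (of (Fin.snoc M v)).row = insert v (Set.range M.row) :=
  Fin.range_snoc (α := n → α) M v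

theorem rank_of_snoc_of_mem [Fintype n] (M : Matrix (Fin m) n F) {v : n → F}
    (hv : v ∈ span F (Set.range M.row)) : (of (Fin.snoc M v)).rank = M.rank := by
  rw [rank_eq_finrank_span_row, rank_eq_finrank_span_row, range_row_of_snoc,
    span_insert_eq_span hv]

theorem rank_of_snoc_of_notMem [Fintype n] (M : Matrix (Fin m) n F) {v : n → F}
    (hv : v ∉ span F (Set.range M.row)) : (of (Fin.snoc M v)).rank = M.rank + 1 := by
  rw [rank_eq_finrank_span_row, rank_eq_finrank_span_row, range_row_of_snoc, span_insert,
    sup_comm, finrank_sup_span_singleton hv]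

theorem rank_of_snoc_eq_rank_iff [Fintype n] (M : Matrix (Fin m) n F) (v : n → F) :
    (of (Fin.snoc M v)).rank = M.rank ↔ v ∈ span F (Set.range M.row) := by
  by_cases hv : v ∈ span F (Set.range M.row)
  · simp [rank_of_snoc_of_mem M hv, hv]
  · simp [rank_of_snoc_of_notMem M hv, hv]

theorem rank_of_snoc_eq_rank_add_one_iff [Fintype n] (M : Matrix (Fin m) n F) (v : n → F) :
    (of (Fin.snoc M v)).rank = M.rank + 1 ↔ v ∉ span F (Set.range M.row) := by
  by_cases hv : v ∈ span F (Set.range M.row)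
  · simp [rank_of_snoc_of_mem M hv, hv]
  · simp [rank_of_snoc_of_notMem M hv, hv]

theorem map_funLeft_span_row {R : Type*} [CommSemiring R] {m n' : Type*}
    (M : Matrix m n R) (e : n' → n) :
    (span R (Set.range M.row)).map (LinearMap.funLeft R R e) =
      span R (Set.range (M.submatrix id e).row) := by
  rw [map_span, ← Set.range_comp]
  rfl

end Matrix

theorem Submodule.finrank_comap_add_finrank_map {K U V W : Type*} [DivisionRing K]
    [AddCommGroup U] [Module K U] [AddCommGroup V] [Module K V] [FiniteDimensional K V]
    [AddCommGroup W] [Module K W] {ι : U →ₗ[K] V} {π : V →ₗ[K] W}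
    (hι : Function.Injective ι) (hexact : LinearMap.range ι = LinearMap.ker π)
    (p : Submodule K V) :
    finrank K (p.comap ι) + finrank K (p.map π) = finrank K p := by
  have hker : finrank K (p.comap ι) = finrank K (LinearMap.ker (π.domRestrict p)) := by
    rw [(equivMapOfInjective ι hι _).finrank_eq,
      (equivMapOfInjective p.subtype p.subtype_injective _).finrank_eq,
      LinearMap.ker_domRestrict, map_comap_eq, map_comap_eq, range_subtype, hexact, inf_comm]
  rw [hker, ← LinearMap.range_domRestrict, add_comm, LinearMap.finrank_range_add_finrank_ker]

theorem Nat.card_subtype_not {α : Type*} [Finite α] (p : α → Prop) :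
    Nat.card {x // ¬ p x} = Nat.card α - Nat.card {x // p x} := by
  classical
  have := Fintype.ofFinite α
  simp only [Nat.card_eq_fintype_card, Fintype.card_subtype_compl]

namespace LinearMap

variable (R : Type*) [Semiring R] (a k : ℕ)

def finAppendZero : (Fin a → R) →ₗ[R] (Fin (a + k) → R) where
  toFun w := Fin.append w 0
  map_add' w w' := by
    ext i
    refine Fin.addCases (fun j => ?_) (fun j => ?_) i <;> simp
  map_smul' c w := by
    ext i
    refine Fin.addCases (fun j => ?_) (fun j => ?_) i <;> simp

variable {R a k} in
@[simp]
theorem finAppendZero_apply (w : Fin a → R) : finAppendZero R a k w = Fin.append w 0 := rfl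

theorem finAppendZero_injective : Function.Injective (finAppendZero R a k) := fun w w' h => by
  ext j
  simpa using congrFun h (Fin.castAdd k j)

theorem range_finAppendZero :
    range (finAppendZero R a k) = ker (funLeft R R (Fin.natAdd a : Fin k → Fin (a + k))) := by
  ext v
  constructor
  · rintro ⟨w, rfl⟩
    ext j
    simp
  · intro hv
    refine ⟨fun j => v (Fin.castAdd k j), ?_⟩
    rw [mem_ker] at hv
    conv_rhs => rw [← Fin.append_castAdd_natAdd (f := v)]
    rw [finAppendZero_apply, ← hv]
    rfl

end LinearMap

theorem stmt_2 (q m a k r r' : ℕ)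
    (F : Type*) [Field F] [Fintype F] (hq : Fintype.card F = q)
    (M : Matrix (Fin m) (Fin (a + k)) F)
    (hM : M.rank = r)
    (hM' : (M.submatrix id (Fin.natAdd a)).rank = r') :
    Nat.card {w : Fin a → F //
        (Matrix.of (Fin.snoc M (Fin.addCases (fun j => w j) (fun _ => (0 : F))))).rank = r}
      = q ^ (r - r') ∧
    Nat.card {w : Fin a → F //
        (Matrix.of (Fin.snoc M (Fin.addCases (fun j => w j) (fun _ => (0 : F))))).rank = r + 1}
      = q ^ a - q ^ (r - r') := by
  set R := span F (Set.range M.row)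
  have hdim : finrank F (R.comap (LinearMap.finAppendZero F a k)) = r - r' := by
    have := finrank_comap_add_finrank_map (LinearMap.finAppendZero_injective F a k)
      (LinearMap.range_finAppendZero F a k) R
    rw [Matrix.map_funLeft_span_row, ← Matrix.rank_eq_finrank_span_row, hM',
      ← Matrix.rank_eq_finrank_span_row, hM] at this
    omega
  have hcard :
      Nat.card {w : Fin a → F // LinearMap.finAppendZero F a k w ∈ R} = q ^ (r - r') := by
    rw [← hq, ← hdim, ← Nat.card_eq_fintype_card, ← natCard_eq_pow_finrank]
    rfl
  have hmem : ∀ w : Fin a → F,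
      (Matrix.of (Fin.snoc M (Fin.addCases (fun j => w j) (fun _ => (0 : F))))).rank = r ↔
        LinearMap.finAppendZero F a k w ∈ R := fun w => hM ▸ M.rank_of_snoc_eq_rank_iff _
  have hnotMem : ∀ w : Fin a → F,
      (Matrix.of (Fin.snoc M (Fin.addCases (fun j => w j) (fun _ => (0 : F))))).rank = r + 1 ↔
        LinearMap.finAppendZero F a k w ∉ R :=
    fun w => hM ▸ M.rank_of_snoc_eq_rank_add_one_iff _
  rw [Nat.card_congr (Equiv.subtypeEquivRight hmem), hcard,
    Nat.card_congr (Equiv.subtypeEquivRight hnotMem), Nat.card_subtype_not, hcard,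
    Nat.card_fun, Nat.card_fin, Nat.card_eq_fintype_card, hq]
  exact ⟨rfl, rfl⟩
end

section
/- A permutation $w \in \mathfrak{S}_n$ can be decomposed as $w = a_1 \cdots a_k b_1 \cdots b_{n-k}$ (for some $0 \leq k \leq n$) such that $a_i < b_j$ for all $i, j$ and both subwords $a_1 \cdots a_k$ and $b_1 \cdots b_{n-k}$ avoid the pattern $2143$, if and only if $w$ avoids the nine patterns $24153$, $25143$, $31524$, $31542$, $32514$, $32541$, $42153$, $52143$, and $214365$. -/
/-- `w` contains the pattern given by the word `p` (a list of distinct numbers):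
there are positions `i₁ < ⋯ < iₘ` on which `w` is order-isomorphic to `p`. -/
def containsPat {n : ℕ} (w : Equiv.Perm (Fin n)) (p : List ℕ) : Prop :=
  ∃ f : Fin p.length → Fin n, StrictMono f ∧
    ∀ a b : Fin p.length, p.get a < p.get b ↔ w (f a) < w (f b)

/-- The subword of `w` on the positions satisfying `P` contains no occurrence of
the pattern `2143`. -/
def avoids2143On {n : ℕ} (w : Equiv.Perm (Fin n)) (P : Fin n → Prop) : Prop :=
  ¬ ∃ i₁ i₂ i₃ i₄ : Fin n, i₁ < i₂ ∧ i₂ < i₃ ∧ i₃ < i₄ ∧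
      P i₁ ∧ P i₂ ∧ P i₃ ∧ P i₄ ∧
      w i₂ < w i₁ ∧ w i₁ < w i₄ ∧ w i₄ < w i₃

namespace Stmt12Aux

/-- An occurrence of the pattern 2143 in `w`. -/
def Occ {n : ℕ} (w : Equiv.Perm (Fin n)) (a b c d : Fin n) : Prop :=
  (a:ℕ) < b ∧ (b:ℕ) < c ∧ (c:ℕ) < d ∧
  (w b:ℕ) < w a ∧ (w a:ℕ) < w d ∧ (w d:ℕ) < w c

section Extract

variable {n : ℕ} (w : Equiv.Perm (Fin n)) (x1 x2 x3 x4 x5 x6 : Fin n)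

lemma has24153
    (p12 : (x1:ℕ) < x2) (p23 : (x2:ℕ) < x3) (p34 : (x3:ℕ) < x4) (p45 : (x4:ℕ) < x5)
    (c1 : (w x3:ℕ) < w x1) (c2 : (w x1:ℕ) < w x5) (c3 : (w x5:ℕ) < w x2)
    (c4 : (w x2:ℕ) < w x4) :
    containsPat w [2,4,1,5,3] := by
  refine ⟨fun i => [x1,x2,x3,x4,x5].get i, ?_, ?_⟩
  · intro a b hab
    fin_cases a <;> fin_cases b <;>
      simp only [List.get, Fin.lt_def, Fin.mk_lt_mk] at hab ⊢ <;> omega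
  · intro a b
    fin_cases a <;> fin_cases b <;>
      simp only [List.get, Fin.lt_def, Fin.mk_lt_mk] <;> omega

lemma has25143
    (p12 : (x1:ℕ) < x2) (p23 : (x2:ℕ) < x3) (p34 : (x3:ℕ) < x4) (p45 : (x4:ℕ) < x5)
    (c1 : (w x3:ℕ) < w x1) (c2 : (w x1:ℕ) < w x5) (c3 : (w x5:ℕ) < w x4)
    (c4 : (w x4:ℕ) < w x2) :
    containsPat w [2,5,1,4,3] := by
  refine ⟨fun i => [x1,x2,x3,x4,x5].get i, ?_, ?_⟩
  · intro a b hab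
    fin_cases a <;> fin_cases b <;>
      simp only [List.get, Fin.lt_def, Fin.mk_lt_mk] at hab ⊢ <;> omega
  · intro a b
    fin_cases a <;> fin_cases b <;>
      simp only [List.get, Fin.lt_def, Fin.mk_lt_mk] <;> omega

lemma has31524
    (p12 : (x1:ℕ) < x2) (p23 : (x2:ℕ) < x3) (p34 : (x3:ℕ) < x4) (p45 : (x4:ℕ) < x5)
    (c1 : (w x2:ℕ) < w x4) (c2 : (w x4:ℕ) < w x1) (c3 : (w x1:ℕ) < w x5)
    (c4 : (w x5:ℕ) < w x3) :
    containsPat w [3,1,5,2,4] := by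
  refine ⟨fun i => [x1,x2,x3,x4,x5].get i, ?_, ?_⟩
  · intro a b hab
    fin_cases a <;> fin_cases b <;>
      simp only [List.get, Fin.lt_def, Fin.mk_lt_mk] at hab ⊢ <;> omega
  · intro a b
    fin_cases a <;> fin_cases b <;>
      simp only [List.get, Fin.lt_def, Fin.mk_lt_mk] <;> omega

lemma has31542
    (p12 : (x1:ℕ) < x2) (p23 : (x2:ℕ) < x3) (p34 : (x3:ℕ) < x4) (p45 : (x4:ℕ) < x5)
    (c1 : (w x2:ℕ) < w x5) (c2 : (w x5:ℕ) < w x1) (c3 : (w x1:ℕ) < w x4)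
    (c4 : (w x4:ℕ) < w x3) :
    containsPat w [3,1,5,4,2] := by
  refine ⟨fun i => [x1,x2,x3,x4,x5].get i, ?_, ?_⟩
  · intro a b hab
    fin_cases a <;> fin_cases b <;>
      simp only [List.get, Fin.lt_def, Fin.mk_lt_mk] at hab ⊢ <;> omega
  · intro a b
    fin_cases a <;> fin_cases b <;>
      simp only [List.get, Fin.lt_def, Fin.mk_lt_mk] <;> omega

lemma has32514
    (p12 : (x1:ℕ) < x2) (p23 : (x2:ℕ) < x3) (p34 : (x3:ℕ) < x4) (p45 : (x4:ℕ) < x5)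
    (c1 : (w x4:ℕ) < w x2) (c2 : (w x2:ℕ) < w x1) (c3 : (w x1:ℕ) < w x5)
    (c4 : (w x5:ℕ) < w x3) :
    containsPat w [3,2,5,1,4] := by
  refine ⟨fun i => [x1,x2,x3,x4,x5].get i, ?_, ?_⟩
  · intro a b hab
    fin_cases a <;> fin_cases b <;>
      simp only [List.get, Fin.lt_def, Fin.mk_lt_mk] at hab ⊢ <;> omega
  · intro a b
    fin_cases a <;> fin_cases b <;>
      simp only [List.get, Fin.lt_def, Fin.mk_lt_mk] <;> omega

lemma has32541
    (p12 : (x1:ℕ) < x2) (p23 : (x2:ℕ) < x3) (p34 : (x3:ℕ) < x4) (p45 : (x4:ℕ) < x5)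
    (c1 : (w x5:ℕ) < w x2) (c2 : (w x2:ℕ) < w x1) (c3 : (w x1:ℕ) < w x4)
    (c4 : (w x4:ℕ) < w x3) :
    containsPat w [3,2,5,4,1] := by
  refine ⟨fun i => [x1,x2,x3,x4,x5].get i, ?_, ?_⟩
  · intro a b hab
    fin_cases a <;> fin_cases b <;>
      simp only [List.get, Fin.lt_def, Fin.mk_lt_mk] at hab ⊢ <;> omega
  · intro a b
    fin_cases a <;> fin_cases b <;>
      simp only [List.get, Fin.lt_def, Fin.mk_lt_mk] <;> omega

lemma has42153
    (p12 : (x1:ℕ) < x2) (p23 : (x2:ℕ) < x3) (p34 : (x3:ℕ) < x4) (p45 : (x4:ℕ) < x5)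
    (c1 : (w x3:ℕ) < w x2) (c2 : (w x2:ℕ) < w x5) (c3 : (w x5:ℕ) < w x1)
    (c4 : (w x1:ℕ) < w x4) :
    containsPat w [4,2,1,5,3] := by
  refine ⟨fun i => [x1,x2,x3,x4,x5].get i, ?_, ?_⟩
  · intro a b hab
    fin_cases a <;> fin_cases b <;>
      simp only [List.get, Fin.lt_def, Fin.mk_lt_mk] at hab ⊢ <;> omega
  · intro a b
    fin_cases a <;> fin_cases b <;>
      simp only [List.get, Fin.lt_def, Fin.mk_lt_mk] <;> omega

lemma has52143
    (p12 : (x1:ℕ) < x2) (p23 : (x2:ℕ) < x3) (p34 : (x3:ℕ) < x4) (p45 : (x4:ℕ) < x5)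
    (c1 : (w x3:ℕ) < w x2) (c2 : (w x2:ℕ) < w x5) (c3 : (w x5:ℕ) < w x4)
    (c4 : (w x4:ℕ) < w x1) :
    containsPat w [5,2,1,4,3] := by
  refine ⟨fun i => [x1,x2,x3,x4,x5].get i, ?_, ?_⟩
  · intro a b hab
    fin_cases a <;> fin_cases b <;>
      simp only [List.get, Fin.lt_def, Fin.mk_lt_mk] at hab ⊢ <;> omega
  · intro a b
    fin_cases a <;> fin_cases b <;>
      simp only [List.get, Fin.lt_def, Fin.mk_lt_mk] <;> omega

lemma has214365
    (p12 : (x1:ℕ) < x2) (p23 : (x2:ℕ) < x3) (p34 : (x3:ℕ) < x4) (p45 : (x4:ℕ) < x5)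
    (p56 : (x5:ℕ) < x6)
    (c1 : (w x2:ℕ) < w x1) (c2 : (w x1:ℕ) < w x4) (c3 : (w x4:ℕ) < w x3)
    (c4 : (w x3:ℕ) < w x6) (c5 : (w x6:ℕ) < w x5) :
    containsPat w [2,1,4,3,6,5] := by
  refine ⟨fun i => [x1,x2,x3,x4,x5,x6].get i, ?_, ?_⟩
  · intro a b hab
    fin_cases a <;> fin_cases b <;>
      simp only [List.get, Fin.lt_def, Fin.mk_lt_mk] at hab ⊢ <;> omega
  · intro a b
    fin_cases a <;> fin_cases b <;>
      simp only [List.get, Fin.lt_def, Fin.mk_lt_mk] <;> omega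

end Extract

section Core

variable {n : ℕ} {w : Equiv.Perm (Fin n)}

lemma wval_inj {x y : Fin n} (h : (w x : ℕ) = (w y : ℕ)) : (x:ℕ) = (y:ℕ) := by
  have : w x = w y := Fin.val_injective h
  have := w.injective this
  exact congrArg Fin.val this

/-- extra element strictly before the "2" of an occurrence, with value above the "3". -/
lemma lemE1
    (h1 : ¬ containsPat w [2,4,1,5,3]) (h2 : ¬ containsPat w [2,5,1,4,3])
    (h3 : ¬ containsPat w [4,2,1,5,3]) (h4 : ¬ containsPat w [5,2,1,4,3])
    (p1 p2 p3 p4 a : Fin n) (ho : Occ w p1 p2 p3 p4)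
    (ha : (a:ℕ) < p2) (hav : (w p4:ℕ) < w a) (hne : (a:ℕ) ≠ p1) : False := by
  obtain ⟨o1,o2,o3,o4,o5,o6⟩ := ho
  rcases lt_or_gt_of_ne hne with hap | hap
  · rcases lt_trichotomy ((w a:ℕ)) ((w p3:ℕ)) with hv | hv | hv
    · exact h3 (has42153 w a p1 p2 p3 p4 hap (by omega) o2 o3 o4 o5 hav hv)
    · have := wval_inj (w := w) hv; omega
    · exact h4 (has52143 w a p1 p2 p3 p4 hap (by omega) o2 o3 o4 o5 o6 hv)
  · rcases lt_trichotomy ((w a:ℕ)) ((w p3:ℕ)) with hv | hv | hv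
    · exact h1 (has24153 w p1 a p2 p3 p4 hap ha o2 o3 o4 o5 hav hv)
    · have := wval_inj (w := w) hv; omega
    · exact h2 (has25143 w p1 a p2 p3 p4 hap ha o2 o3 o4 o5 o6 hv)

/-- extra element strictly after the "4" of an occurrence, with value below the "1". -/
lemma lemE2
    (h1 : ¬ containsPat w [3,1,5,2,4]) (h2 : ¬ containsPat w [3,1,5,4,2])
    (h3 : ¬ containsPat w [3,2,5,1,4]) (h4 : ¬ containsPat w [3,2,5,4,1])
    (p1 p2 p3 p4 c : Fin n) (ho : Occ w p1 p2 p3 p4)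
    (hc : (p3:ℕ) < c) (hcv : (w c:ℕ) < w p1) (hne : (c:ℕ) ≠ p4) : False := by
  obtain ⟨o1,o2,o3,o4,o5,o6⟩ := ho
  rcases lt_or_gt_of_ne hne with hcp | hcp
  · rcases lt_trichotomy ((w c:ℕ)) ((w p2:ℕ)) with hv | hv | hv
    · exact h3 (has32514 w p1 p2 p3 c p4 o1 o2 hc hcp hv o4 o5 o6)
    · have := wval_inj (w := w) hv; omega
    · exact h1 (has31524 w p1 p2 p3 c p4 o1 o2 hc hcp hv hcv o5 o6)
  · rcases lt_trichotomy ((w c:ℕ)) ((w p2:ℕ)) with hv | hv | hv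
    · exact h4 (has32541 w p1 p2 p3 p4 c o1 o2 o3 hcp hv o4 o5 o6)
    · have := wval_inj (w := w) hv; omega
    · exact h2 (has31542 w p1 p2 p3 p4 c o1 o2 o3 hcp hv hcv o5 o6)

/-- for any two occurrences, the "2"-value of one is below the "3"-value of the other. -/
lemma lemONE
    (h1 : ¬ containsPat w [2,4,1,5,3]) (h2 : ¬ containsPat w [2,5,1,4,3])
    (h3 : ¬ containsPat w [3,1,5,2,4]) (h4 : ¬ containsPat w [3,1,5,4,2])
    (h5 : ¬ containsPat w [3,2,5,1,4]) (h6 : ¬ containsPat w [3,2,5,4,1])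
    (h7 : ¬ containsPat w [4,2,1,5,3]) (h8 : ¬ containsPat w [5,2,1,4,3])
    (h9 : ¬ containsPat w [2,1,4,3,6,5])
    (p1 p2 p3 p4 q1 q2 q3 q4 : Fin n)
    (hP : Occ w p1 p2 p3 p4) (hQ : Occ w q1 q2 q3 q4) :
    (w p1 : ℕ) < w q4 := by
  by_contra hcon
  push_neg at hcon
  obtain ⟨a1,a2,a3,a4,a5,a6⟩ := hP
  obtain ⟨b1,b2,b3,b4,b5,b6⟩ := hQ
  rcases lt_trichotomy ((q4:ℕ)) ((p3:ℕ)) with h | h | h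
  · -- q4 before p3
    rcases lt_trichotomy ((w q3:ℕ)) ((w p4:ℕ)) with hv | hv | hv
    · exact h9 (has214365 w q1 q2 q3 q4 p3 p4 b1 b2 b3 h a3 b4 b5 b6 hv a6)
    · have := wval_inj (w := w) hv; omega
    · rcases lt_trichotomy ((q3:ℕ)) ((p2:ℕ)) with h3' | h3' | h3'
      · refine lemE1 h1 h2 h7 h8 p1 p2 p3 p4 q3 ⟨a1,a2,a3,a4,a5,a6⟩ h3' hv ?_
        intro he
        have : (w q3:ℕ) = (w p1:ℕ) := by
          have : q3 = p1 := Fin.val_injective he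
          rw [this]
        omega
      · have : q3 = p2 := Fin.val_injective h3'
        have : (w q3:ℕ) = (w p2:ℕ) := by rw [this]
        omega
      · -- p2 < q3 < q4 < p3
        have hu4 : (w q4:ℕ) < w p1 := by
          rcases eq_or_lt_of_le hcon with he | hl
          · have := wval_inj (w := w) he.symm; omega
          · exact hl
        rcases lt_trichotomy ((w q4:ℕ)) ((w p2:ℕ)) with h4' | h4' | h4'
        · exact h5 (has32514 w p1 p2 q3 q4 p4 a1 h3' b3 (by omega) h4' a4 a5 hv)
        · have := wval_inj (w := w) h4'; omega
        · exact h3 (has31524 w p1 p2 q3 q4 p4 a1 h3' b3 (by omega) h4' hu4 a5 hv)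
  · -- q4 = p3
    have : q4 = p3 := Fin.val_injective h
    have : (w q4:ℕ) = (w p3:ℕ) := by rw [this]
    omega
  · -- q4 after p3
    refine lemE2 h3 h4 h5 h6 p1 p2 p3 p4 q4 ⟨a1,a2,a3,a4,a5,a6⟩ h ?_ ?_
    · rcases eq_or_lt_of_le hcon with he | hl
      · have := wval_inj (w := w) he.symm; omega
      · exact hl
    · intro he
      have : q4 = p4 := Fin.val_injective he
      have : (w q4:ℕ) = (w p4:ℕ) := by rw [this]
      omega

/-- pigeonhole: a position below `m` with value at least `m` forces
a position after it (in fact after any such position) with value below `m`. -/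
lemma pigeon (q : Fin n) (m : ℕ) (hqm : (q:ℕ) < m) (hwq : m ≤ (w q:ℕ)) :
    ∃ c : Fin n, (q:ℕ) < c ∧ (w c:ℕ) < m := by
  by_contra hc
  push_neg at hc
  have hmn : m ≤ n := le_of_lt (lt_of_le_of_lt hwq (w q).isLt)
  have hlt : ∀ v : Fin m, ((w.symm ⟨v.1, lt_of_lt_of_le v.2 hmn⟩ : Fin n) : ℕ) < q := by
    intro v
    set p := w.symm ⟨v.1, lt_of_lt_of_le v.2 hmn⟩ with hp
    have hwp : w p = ⟨v.1, lt_of_lt_of_le v.2 hmn⟩ := by simp [hp]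
    rcases lt_trichotomy ((p:ℕ)) ((q:ℕ)) with h | h | h
    · exact h
    · exfalso
      have : p = q := Fin.val_injective h
      rw [this] at hwp
      have : (w q : ℕ) = v.1 := by rw [hwp]
      omega
    · exfalso
      have := hc p h
      rw [hwp] at this
      simp at this
      omega
  have hinj : Function.Injective (fun v : Fin m =>
      (⟨(w.symm ⟨v.1, lt_of_lt_of_le v.2 hmn⟩ : Fin n), hlt v⟩ : Fin (q:ℕ))) := by
    intro v v' h
    simp only [Fin.mk.injEq] at h
    have : w.symm ⟨v.1, lt_of_lt_of_le v.2 hmn⟩ = w.symm ⟨v'.1, lt_of_lt_of_le v'.2 hmn⟩ :=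
      Fin.val_injective h
    have := w.symm.injective this
    simp only [Fin.mk.injEq] at this
    exact Fin.val_injective this
  have := Fintype.card_le_of_injective _ hinj
  simp only [Fintype.card_fin] at this
  omega

/-- if positions below `k` have values below `k`, then positions at least `k`
have values at least `k`. -/
lemma splitvals (k : ℕ) (h : ∀ i : Fin n, (i:ℕ) < k → (w i:ℕ) < k)
    (j : Fin n) (hj : k ≤ (j:ℕ)) : k ≤ (w j:ℕ) := by
  by_contra hcj
  push_neg at hcj
  have hkn : k ≤ n := le_trans hj (le_of_lt j.isLt)
  have hinj : Function.Injective (fun i : Fin (k+1) =>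
      if h' : (i:ℕ) < k then
        (⟨(w ⟨i.1, lt_of_lt_of_le h' hkn⟩ : ℕ), h _ h'⟩ : Fin k)
      else ⟨(w j:ℕ), hcj⟩) := by
    intro i i' he
    by_cases hi : (i:ℕ) < k <;> by_cases hi' : (i':ℕ) < k <;>
      simp only [hi, hi', dif_pos, dif_neg, not_false_iff, Fin.mk.injEq] at he
    · have := wval_inj (w := w) he
      simp only at this
      exact Fin.val_injective this
    · exfalso
      have : (⟨i.1, lt_of_lt_of_le hi hkn⟩ : Fin n) = j :=
        w.injective (Fin.val_injective he)
      have : (i:ℕ) = (j:ℕ) := congrArg Fin.val this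
      omega
    · exfalso
      have : (⟨i'.1, lt_of_lt_of_le hi' hkn⟩ : Fin n) = j :=
        w.injective (Fin.val_injective he.symm)
      have : (i':ℕ) = (j:ℕ) := congrArg Fin.val this
      omega
    · have : (i:ℕ) = (i':ℕ) := by omega
      exact Fin.val_injective this
  have := Fintype.card_le_of_injective _ hinj
  simp only [Fintype.card_fin] at this
  omega

end Core

end Stmt12Aux
namespace Stmt12Aux

section Min

variable {n : ℕ} {w : Equiv.Perm (Fin n)} {k : ℕ}

/-- any occurrence whose "3"-value is minimal has its third position at least `k`. -/
lemma lemL3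
    (h1 : ¬ containsPat w [3,1,5,2,4]) (h2 : ¬ containsPat w [3,1,5,4,2])
    (h3 : ¬ containsPat w [3,2,5,1,4]) (h4 : ¬ containsPat w [3,2,5,4,1])
    (hmin : ∀ a b c d : Fin n, Occ w a b c d → k ≤ (w d:ℕ))
    (q1 q2 q3 q4 : Fin n) (hQ : Occ w q1 q2 q3 q4) (hk : (w q4:ℕ) ≤ k) :
    k ≤ (q3:ℕ) := by
  by_contra hcon
  push_neg at hcon
  have hkeq : (w q4:ℕ) = k := le_antisymm hk (hmin _ _ _ _ hQ)
  obtain ⟨b1,b2,b3,b4,b5,b6⟩ := hQ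
  obtain ⟨c, hc1, hc2⟩ := pigeon (w := w) q3 k hcon (by omega)
  rcases lt_trichotomy ((w c:ℕ)) ((w q1:ℕ)) with hv | hv | hv
  · refine lemE2 h1 h2 h3 h4 q1 q2 q3 q4 c ⟨b1,b2,b3,b4,b5,b6⟩ hc1 hv ?_
    intro he
    have : c = q4 := Fin.val_injective he
    have : (w c:ℕ) = (w q4:ℕ) := by rw [this]
    omega
  · have := wval_inj (w := w) hv
    omega
  · have hc3 : (w c:ℕ) < (w q3:ℕ) := by omega
    have hocc : Occ w q1 q2 q3 c := ⟨b1, b2, hc1, b4, hv, hc3⟩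
    have := hmin _ _ _ _ hocc
    omega

/-- positions below `k` carry values below `k`, where `k` is the minimal "3"-value. -/
lemma lemC2
    (h1 : ¬ containsPat w [2,4,1,5,3]) (h2 : ¬ containsPat w [2,5,1,4,3])
    (h3 : ¬ containsPat w [3,1,5,2,4]) (h4 : ¬ containsPat w [3,1,5,4,2])
    (h5 : ¬ containsPat w [3,2,5,1,4]) (h6 : ¬ containsPat w [3,2,5,4,1])
    (h7 : ¬ containsPat w [4,2,1,5,3]) (h8 : ¬ containsPat w [5,2,1,4,3])
    (hmin : ∀ a b c d : Fin n, Occ w a b c d → k ≤ (w d:ℕ))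
    (r1 r2 r3 r4 : Fin n) (hR : Occ w r1 r2 r3 r4) (hRk : (w r4:ℕ) = k)
    (a : Fin n) (ha : (a:ℕ) < k) : (w a:ℕ) < k := by
  by_contra hcon
  push_neg at hcon
  have hq3 := lemL3 h3 h4 h5 h6 hmin r1 r2 r3 r4 hR (le_of_eq hRk)
  obtain ⟨b1,b2,b3,b4,b5,b6⟩ := hR
  have hav : (w r4:ℕ) < (w a:ℕ) := by
    rcases eq_or_lt_of_le (hRk ▸ hcon) with he | hl
    · exfalso
      have := wval_inj (w := w) he
      omega
    · exact hl
  rcases lt_trichotomy ((a:ℕ)) ((r2:ℕ)) with h | h | h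
  · refine lemE1 h1 h2 h7 h8 r1 r2 r3 r4 a ⟨b1,b2,b3,b4,b5,b6⟩ h hav ?_
    intro he
    have : a = r1 := Fin.val_injective he
    have : (w a:ℕ) = (w r1:ℕ) := by rw [this]
    omega
  · have : a = r2 := Fin.val_injective h
    have : (w a:ℕ) = (w r2:ℕ) := by rw [this]
    omega
  · have ha4 : (a:ℕ) < (r4:ℕ) := by omega
    have ha5 : (w r2:ℕ) < (w r1:ℕ) := b4
    have ha6 : (w r1:ℕ) < (w a:ℕ) := by omega
    have hocc : Occ w r1 r2 a r4 := ⟨b1, h, ha4, b4, by omega, hav⟩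
    have := lemL3 h3 h4 h5 h6 hmin r1 r2 a r4 hocc (le_of_eq hRk)
    omega

end Min

end Stmt12Aux
namespace Stmt12Aux

lemma fwd_key {n : ℕ} {w : Equiv.Perm (Fin n)} {k : ℕ}
    (hs : ∀ i j : Fin n, (i:ℕ) < k → k ≤ (j:ℕ) → w i < w j)
    {x y : Fin n} (hxy : x < y) (hv : w y < w x) : ((x:ℕ) < k ↔ (y:ℕ) < k) := by
  constructor
  · intro hx
    by_contra hy
    exact absurd (hs x y hx (le_of_not_gt hy)) (not_lt.mpr hv.le)
  · intro hy
    exact lt_trans (Fin.lt_def.mp hxy) hy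

end Stmt12Aux

open Stmt12Aux

theorem stmt_12 {n : ℕ} (w : Equiv.Perm (Fin n)) :
    (∃ k ≤ n,
      (∀ i j : Fin n, (i : ℕ) < k → k ≤ (j : ℕ) → w i < w j) ∧
      avoids2143On w (fun i => (i : ℕ) < k) ∧
      avoids2143On w (fun i => k ≤ (i : ℕ))) ↔
    ∀ p ∈ [[2,4,1,5,3], [2,5,1,4,3], [3,1,5,2,4], [3,1,5,4,2],
           [3,2,5,1,4], [3,2,5,4,1], [4,2,1,5,3], [5,2,1,4,3],
           [2,1,4,3,6,5]], ¬ containsPat w p := by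

  constructor
  · -- forward direction
    rintro ⟨k, hkn, hs, hL, hR⟩ p hp
    fin_cases hp
    · -- 24153, quad (0,2,3,4)
      rintro ⟨f, hf, hiff⟩
      have d02 := (hiff ⟨2, by decide⟩ ⟨0, by decide⟩).mp (by decide)
      have d12 := (hiff ⟨2, by decide⟩ ⟨1, by decide⟩).mp (by decide)
      have d14 := (hiff ⟨4, by decide⟩ ⟨1, by decide⟩).mp (by decide)
      have d34 := (hiff ⟨4, by decide⟩ ⟨3, by decide⟩).mp (by decide)
      have v04 := (hiff ⟨0, by decide⟩ ⟨4, by decide⟩).mp (by decide)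
      have e02 := fwd_key hs (hf (show (⟨0, by decide⟩ : Fin 5) < ⟨2, by decide⟩ by decide)) d02
      have e12 := fwd_key hs (hf (show (⟨1, by decide⟩ : Fin 5) < ⟨2, by decide⟩ by decide)) d12
      have e14 := fwd_key hs (hf (show (⟨1, by decide⟩ : Fin 5) < ⟨4, by decide⟩ by decide)) d14
      have e34 := fwd_key hs (hf (show (⟨3, by decide⟩ : Fin 5) < ⟨4, by decide⟩ by decide)) d34
      by_cases h3 : ((f ⟨3, by decide⟩ : Fin n) : ℕ) < k
      · exact hL ⟨f ⟨0, by decide⟩, f ⟨2, by decide⟩, f ⟨3, by decide⟩, f ⟨4, by decide⟩,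
          hf (by decide), hf (by decide), hf (by decide),
          lt_trans (Fin.lt_def.mp (hf (by decide))) h3,
          lt_trans (Fin.lt_def.mp (hf (by decide))) h3, h3, e34.mp h3,
          d02, v04, d34⟩
      · have hs4 : k ≤ ((f ⟨4, by decide⟩ : Fin n) : ℕ) :=
          le_trans (le_of_not_gt h3) (le_of_lt (Fin.lt_def.mp (hf (by decide))))
        have hs0 : k ≤ ((f ⟨0, by decide⟩ : Fin n) : ℕ) :=
          le_of_not_gt fun h0 => absurd (e14.mp (e12.mpr (e02.mp h0))) (not_lt.mpr hs4)
        have hs2 : k ≤ ((f ⟨2, by decide⟩ : Fin n) : ℕ) :=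
          le_of_not_gt fun h2 => absurd (e14.mp (e12.mpr h2)) (not_lt.mpr hs4)
        exact hR ⟨f ⟨0, by decide⟩, f ⟨2, by decide⟩, f ⟨3, by decide⟩, f ⟨4, by decide⟩,
          hf (by decide), hf (by decide), hf (by decide),
          hs0, hs2, le_of_not_gt h3, hs4, d02, v04, d34⟩
    · -- 25143, quad (0,2,3,4)
      rintro ⟨f, hf, hiff⟩
      have d02 := (hiff ⟨2, by decide⟩ ⟨0, by decide⟩).mp (by decide)
      have d12 := (hiff ⟨2, by decide⟩ ⟨1, by decide⟩).mp (by decide)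
      have d13 := (hiff ⟨3, by decide⟩ ⟨1, by decide⟩).mp (by decide)
      have d34 := (hiff ⟨4, by decide⟩ ⟨3, by decide⟩).mp (by decide)
      have v04 := (hiff ⟨0, by decide⟩ ⟨4, by decide⟩).mp (by decide)
      have e02 := fwd_key hs (hf (show (⟨0, by decide⟩ : Fin 5) < ⟨2, by decide⟩ by decide)) d02
      have e12 := fwd_key hs (hf (show (⟨1, by decide⟩ : Fin 5) < ⟨2, by decide⟩ by decide)) d12
      have e13 := fwd_key hs (hf (show (⟨1, by decide⟩ : Fin 5) < ⟨3, by decide⟩ by decide)) d13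
      have e34 := fwd_key hs (hf (show (⟨3, by decide⟩ : Fin 5) < ⟨4, by decide⟩ by decide)) d34
      by_cases h3 : ((f ⟨3, by decide⟩ : Fin n) : ℕ) < k
      · exact hL ⟨f ⟨0, by decide⟩, f ⟨2, by decide⟩, f ⟨3, by decide⟩, f ⟨4, by decide⟩,
          hf (by decide), hf (by decide), hf (by decide),
          lt_trans (Fin.lt_def.mp (hf (by decide))) h3,
          lt_trans (Fin.lt_def.mp (hf (by decide))) h3, h3, e34.mp h3,
          d02, v04, d34⟩
      · have hs4 : k ≤ ((f ⟨4, by decide⟩ : Fin n) : ℕ) :=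
          le_trans (le_of_not_gt h3) (le_of_lt (Fin.lt_def.mp (hf (by decide))))
        have hs0 : k ≤ ((f ⟨0, by decide⟩ : Fin n) : ℕ) :=
          le_of_not_gt fun h0 => absurd (e13.mp (e12.mpr (e02.mp h0))) h3
        have hs2 : k ≤ ((f ⟨2, by decide⟩ : Fin n) : ℕ) :=
          le_of_not_gt fun h2 => absurd (e13.mp (e12.mpr h2)) h3
        exact hR ⟨f ⟨0, by decide⟩, f ⟨2, by decide⟩, f ⟨3, by decide⟩, f ⟨4, by decide⟩,
          hf (by decide), hf (by decide), hf (by decide),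
          hs0, hs2, le_of_not_gt h3, hs4, d02, v04, d34⟩
    · -- 31524, quad (0,1,2,4)
      rintro ⟨f, hf, hiff⟩
      have d01 := (hiff ⟨1, by decide⟩ ⟨0, by decide⟩).mp (by decide)
      have d03 := (hiff ⟨3, by decide⟩ ⟨0, by decide⟩).mp (by decide)
      have d24 := (hiff ⟨4, by decide⟩ ⟨2, by decide⟩).mp (by decide)
      have v04 := (hiff ⟨0, by decide⟩ ⟨4, by decide⟩).mp (by decide)
      have e01 := fwd_key hs (hf (show (⟨0, by decide⟩ : Fin 5) < ⟨1, by decide⟩ by decide)) d01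
      have e03 := fwd_key hs (hf (show (⟨0, by decide⟩ : Fin 5) < ⟨3, by decide⟩ by decide)) d03
      have e24 := fwd_key hs (hf (show (⟨2, by decide⟩ : Fin 5) < ⟨4, by decide⟩ by decide)) d24
      by_cases h2 : ((f ⟨2, by decide⟩ : Fin n) : ℕ) < k
      · exact hL ⟨f ⟨0, by decide⟩, f ⟨1, by decide⟩, f ⟨2, by decide⟩, f ⟨4, by decide⟩,
          hf (by decide), hf (by decide), hf (by decide),
          lt_trans (Fin.lt_def.mp (hf (by decide))) h2,
          lt_trans (Fin.lt_def.mp (hf (by decide))) h2, h2, e24.mp h2,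
          d01, v04, d24⟩
      · have hs3 : k ≤ ((f ⟨3, by decide⟩ : Fin n) : ℕ) :=
          le_trans (le_of_not_gt h2) (le_of_lt (Fin.lt_def.mp (hf (by decide))))
        have hs4 : k ≤ ((f ⟨4, by decide⟩ : Fin n) : ℕ) :=
          le_trans (le_of_not_gt h2) (le_of_lt (Fin.lt_def.mp (hf (by decide))))
        have hs0 : k ≤ ((f ⟨0, by decide⟩ : Fin n) : ℕ) :=
          le_of_not_gt fun h0 => absurd (e03.mp h0) (not_lt.mpr hs3)
        have hs1 : k ≤ ((f ⟨1, by decide⟩ : Fin n) : ℕ) :=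
          le_of_not_gt fun h1 => absurd (e03.mp (e01.mpr h1)) (not_lt.mpr hs3)
        exact hR ⟨f ⟨0, by decide⟩, f ⟨1, by decide⟩, f ⟨2, by decide⟩, f ⟨4, by decide⟩,
          hf (by decide), hf (by decide), hf (by decide),
          hs0, hs1, le_of_not_gt h2, hs4, d01, v04, d24⟩
    · -- 31542, quad (0,1,2,3)
      rintro ⟨f, hf, hiff⟩
      have d01 := (hiff ⟨1, by decide⟩ ⟨0, by decide⟩).mp (by decide)
      have d04 := (hiff ⟨4, by decide⟩ ⟨0, by decide⟩).mp (by decide)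
      have d23 := (hiff ⟨3, by decide⟩ ⟨2, by decide⟩).mp (by decide)
      have v03 := (hiff ⟨0, by decide⟩ ⟨3, by decide⟩).mp (by decide)
      have e01 := fwd_key hs (hf (show (⟨0, by decide⟩ : Fin 5) < ⟨1, by decide⟩ by decide)) d01
      have e04 := fwd_key hs (hf (show (⟨0, by decide⟩ : Fin 5) < ⟨4, by decide⟩ by decide)) d04
      have e23 := fwd_key hs (hf (show (⟨2, by decide⟩ : Fin 5) < ⟨3, by decide⟩ by decide)) d23
      by_cases h2 : ((f ⟨2, by decide⟩ : Fin n) : ℕ) < k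
      · exact hL ⟨f ⟨0, by decide⟩, f ⟨1, by decide⟩, f ⟨2, by decide⟩, f ⟨3, by decide⟩,
          hf (by decide), hf (by decide), hf (by decide),
          lt_trans (Fin.lt_def.mp (hf (by decide))) h2,
          lt_trans (Fin.lt_def.mp (hf (by decide))) h2, h2, e23.mp h2,
          d01, v03, d23⟩
      · have hs3 : k ≤ ((f ⟨3, by decide⟩ : Fin n) : ℕ) :=
          le_trans (le_of_not_gt h2) (le_of_lt (Fin.lt_def.mp (hf (by decide))))
        have hs4 : k ≤ ((f ⟨4, by decide⟩ : Fin n) : ℕ) :=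
          le_trans (le_of_not_gt h2) (le_of_lt (Fin.lt_def.mp (hf (by decide))))
        have hs0 : k ≤ ((f ⟨0, by decide⟩ : Fin n) : ℕ) :=
          le_of_not_gt fun h0 => absurd (e04.mp h0) (not_lt.mpr hs4)
        have hs1 : k ≤ ((f ⟨1, by decide⟩ : Fin n) : ℕ) :=
          le_of_not_gt fun h1 => absurd (e04.mp (e01.mpr h1)) (not_lt.mpr hs4)
        exact hR ⟨f ⟨0, by decide⟩, f ⟨1, by decide⟩, f ⟨2, by decide⟩, f ⟨3, by decide⟩,
          hf (by decide), hf (by decide), hf (by decide),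
          hs0, hs1, le_of_not_gt h2, hs3, d01, v03, d23⟩
    · -- 32514, quad (0,1,2,4)
      rintro ⟨f, hf, hiff⟩
      have d01 := (hiff ⟨1, by decide⟩ ⟨0, by decide⟩).mp (by decide)
      have d03 := (hiff ⟨3, by decide⟩ ⟨0, by decide⟩).mp (by decide)
      have d13 := (hiff ⟨3, by decide⟩ ⟨1, by decide⟩).mp (by decide)
      have d24 := (hiff ⟨4, by decide⟩ ⟨2, by decide⟩).mp (by decide)
      have v04 := (hiff ⟨0, by decide⟩ ⟨4, by decide⟩).mp (by decide)
      have e01 := fwd_key hs (hf (show (⟨0, by decide⟩ : Fin 5) < ⟨1, by decide⟩ by decide)) d01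
      have e13 := fwd_key hs (hf (show (⟨1, by decide⟩ : Fin 5) < ⟨3, by decide⟩ by decide)) d13
      have e24 := fwd_key hs (hf (show (⟨2, by decide⟩ : Fin 5) < ⟨4, by decide⟩ by decide)) d24
      by_cases h2 : ((f ⟨2, by decide⟩ : Fin n) : ℕ) < k
      · exact hL ⟨f ⟨0, by decide⟩, f ⟨1, by decide⟩, f ⟨2, by decide⟩, f ⟨4, by decide⟩,
          hf (by decide), hf (by decide), hf (by decide),
          lt_trans (Fin.lt_def.mp (hf (by decide))) h2,
          lt_trans (Fin.lt_def.mp (hf (by decide))) h2, h2, e24.mp h2,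
          d01, v04, d24⟩
      · have hs3 : k ≤ ((f ⟨3, by decide⟩ : Fin n) : ℕ) :=
          le_trans (le_of_not_gt h2) (le_of_lt (Fin.lt_def.mp (hf (by decide))))
        have hs4 : k ≤ ((f ⟨4, by decide⟩ : Fin n) : ℕ) :=
          le_trans (le_of_not_gt h2) (le_of_lt (Fin.lt_def.mp (hf (by decide))))
        have hs1 : k ≤ ((f ⟨1, by decide⟩ : Fin n) : ℕ) :=
          le_of_not_gt fun h1 => absurd (e13.mp h1) (not_lt.mpr hs3)
        have hs0 : k ≤ ((f ⟨0, by decide⟩ : Fin n) : ℕ) :=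
          le_of_not_gt fun h0 => absurd (e13.mp (e01.mp h0)) (not_lt.mpr hs3)
        exact hR ⟨f ⟨0, by decide⟩, f ⟨1, by decide⟩, f ⟨2, by decide⟩, f ⟨4, by decide⟩,
          hf (by decide), hf (by decide), hf (by decide),
          hs0, hs1, le_of_not_gt h2, hs4, d01, v04, d24⟩
    · -- 32541, quad (0,1,2,3)
      rintro ⟨f, hf, hiff⟩
      have d01 := (hiff ⟨1, by decide⟩ ⟨0, by decide⟩).mp (by decide)
      have d04 := (hiff ⟨4, by decide⟩ ⟨0, by decide⟩).mp (by decide)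
      have d14 := (hiff ⟨4, by decide⟩ ⟨1, by decide⟩).mp (by decide)
      have d23 := (hiff ⟨3, by decide⟩ ⟨2, by decide⟩).mp (by decide)
      have v03 := (hiff ⟨0, by decide⟩ ⟨3, by decide⟩).mp (by decide)
      have e01 := fwd_key hs (hf (show (⟨0, by decide⟩ : Fin 5) < ⟨1, by decide⟩ by decide)) d01
      have e14 := fwd_key hs (hf (show (⟨1, by decide⟩ : Fin 5) < ⟨4, by decide⟩ by decide)) d14
      have e23 := fwd_key hs (hf (show (⟨2, by decide⟩ : Fin 5) < ⟨3, by decide⟩ by decide)) d23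
      by_cases h2 : ((f ⟨2, by decide⟩ : Fin n) : ℕ) < k
      · exact hL ⟨f ⟨0, by decide⟩, f ⟨1, by decide⟩, f ⟨2, by decide⟩, f ⟨3, by decide⟩,
          hf (by decide), hf (by decide), hf (by decide),
          lt_trans (Fin.lt_def.mp (hf (by decide))) h2,
          lt_trans (Fin.lt_def.mp (hf (by decide))) h2, h2, e23.mp h2,
          d01, v03, d23⟩
      · have hs3 : k ≤ ((f ⟨3, by decide⟩ : Fin n) : ℕ) :=
          le_trans (le_of_not_gt h2) (le_of_lt (Fin.lt_def.mp (hf (by decide))))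
        have hs4 : k ≤ ((f ⟨4, by decide⟩ : Fin n) : ℕ) :=
          le_trans (le_of_not_gt h2) (le_of_lt (Fin.lt_def.mp (hf (by decide))))
        have hs1 : k ≤ ((f ⟨1, by decide⟩ : Fin n) : ℕ) :=
          le_of_not_gt fun h1 => absurd (e14.mp h1) (not_lt.mpr hs4)
        have hs0 : k ≤ ((f ⟨0, by decide⟩ : Fin n) : ℕ) :=
          le_of_not_gt fun h0 => absurd (e14.mp (e01.mp h0)) (not_lt.mpr hs4)
        exact hR ⟨f ⟨0, by decide⟩, f ⟨1, by decide⟩, f ⟨2, by decide⟩, f ⟨3, by decide⟩,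
          hf (by decide), hf (by decide), hf (by decide),
          hs0, hs1, le_of_not_gt h2, hs3, d01, v03, d23⟩
    · -- 42153, quad (1,2,3,4)
      rintro ⟨f, hf, hiff⟩
      have d01 := (hiff ⟨1, by decide⟩ ⟨0, by decide⟩).mp (by decide)
      have d04 := (hiff ⟨4, by decide⟩ ⟨0, by decide⟩).mp (by decide)
      have d12 := (hiff ⟨2, by decide⟩ ⟨1, by decide⟩).mp (by decide)
      have d34 := (hiff ⟨4, by decide⟩ ⟨3, by decide⟩).mp (by decide)
      have v14 := (hiff ⟨1, by decide⟩ ⟨4, by decide⟩).mp (by decide)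
      have e01 := fwd_key hs (hf (show (⟨0, by decide⟩ : Fin 5) < ⟨1, by decide⟩ by decide)) d01
      have e04 := fwd_key hs (hf (show (⟨0, by decide⟩ : Fin 5) < ⟨4, by decide⟩ by decide)) d04
      have e12 := fwd_key hs (hf (show (⟨1, by decide⟩ : Fin 5) < ⟨2, by decide⟩ by decide)) d12
      have e34 := fwd_key hs (hf (show (⟨3, by decide⟩ : Fin 5) < ⟨4, by decide⟩ by decide)) d34
      by_cases h3 : ((f ⟨3, by decide⟩ : Fin n) : ℕ) < k
      · exact hL ⟨f ⟨1, by decide⟩, f ⟨2, by decide⟩, f ⟨3, by decide⟩, f ⟨4, by decide⟩,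
          hf (by decide), hf (by decide), hf (by decide),
          lt_trans (Fin.lt_def.mp (hf (by decide))) h3,
          lt_trans (Fin.lt_def.mp (hf (by decide))) h3, h3, e34.mp h3,
          d12, v14, d34⟩
      · have hs4 : k ≤ ((f ⟨4, by decide⟩ : Fin n) : ℕ) :=
          le_trans (le_of_not_gt h3) (le_of_lt (Fin.lt_def.mp (hf (by decide))))
        have hs1 : k ≤ ((f ⟨1, by decide⟩ : Fin n) : ℕ) :=
          le_of_not_gt fun h1 => absurd (e04.mp (e01.mpr h1)) (not_lt.mpr hs4)
        have hs2 : k ≤ ((f ⟨2, by decide⟩ : Fin n) : ℕ) :=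
          le_of_not_gt fun h2 => absurd (e04.mp (e01.mpr (e12.mpr h2))) (not_lt.mpr hs4)
        exact hR ⟨f ⟨1, by decide⟩, f ⟨2, by decide⟩, f ⟨3, by decide⟩, f ⟨4, by decide⟩,
          hf (by decide), hf (by decide), hf (by decide),
          hs1, hs2, le_of_not_gt h3, hs4, d12, v14, d34⟩
    · -- 52143, quad (1,2,3,4)
      rintro ⟨f, hf, hiff⟩
      have d01 := (hiff ⟨1, by decide⟩ ⟨0, by decide⟩).mp (by decide)
      have d03 := (hiff ⟨3, by decide⟩ ⟨0, by decide⟩).mp (by decide)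
      have d12 := (hiff ⟨2, by decide⟩ ⟨1, by decide⟩).mp (by decide)
      have d34 := (hiff ⟨4, by decide⟩ ⟨3, by decide⟩).mp (by decide)
      have v14 := (hiff ⟨1, by decide⟩ ⟨4, by decide⟩).mp (by decide)
      have e01 := fwd_key hs (hf (show (⟨0, by decide⟩ : Fin 5) < ⟨1, by decide⟩ by decide)) d01
      have e03 := fwd_key hs (hf (show (⟨0, by decide⟩ : Fin 5) < ⟨3, by decide⟩ by decide)) d03
      have e12 := fwd_key hs (hf (show (⟨1, by decide⟩ : Fin 5) < ⟨2, by decide⟩ by decide)) d12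
      have e34 := fwd_key hs (hf (show (⟨3, by decide⟩ : Fin 5) < ⟨4, by decide⟩ by decide)) d34
      by_cases h3 : ((f ⟨3, by decide⟩ : Fin n) : ℕ) < k
      · exact hL ⟨f ⟨1, by decide⟩, f ⟨2, by decide⟩, f ⟨3, by decide⟩, f ⟨4, by decide⟩,
          hf (by decide), hf (by decide), hf (by decide),
          lt_trans (Fin.lt_def.mp (hf (by decide))) h3,
          lt_trans (Fin.lt_def.mp (hf (by decide))) h3, h3, e34.mp h3,
          d12, v14, d34⟩
      · have hs4 : k ≤ ((f ⟨4, by decide⟩ : Fin n) : ℕ) :=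
          le_trans (le_of_not_gt h3) (le_of_lt (Fin.lt_def.mp (hf (by decide))))
        have hs1 : k ≤ ((f ⟨1, by decide⟩ : Fin n) : ℕ) :=
          le_of_not_gt fun h1 => absurd (e03.mp (e01.mpr h1)) h3
        have hs2 : k ≤ ((f ⟨2, by decide⟩ : Fin n) : ℕ) :=
          le_of_not_gt fun h2 => absurd (e03.mp (e01.mpr (e12.mpr h2))) h3
        exact hR ⟨f ⟨1, by decide⟩, f ⟨2, by decide⟩, f ⟨3, by decide⟩, f ⟨4, by decide⟩,
          hf (by decide), hf (by decide), hf (by decide),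
          hs1, hs2, le_of_not_gt h3, hs4, d12, v14, d34⟩
    · -- 214365
      rintro ⟨f, hf, hiff⟩
      have d01 := (hiff ⟨1, by decide⟩ ⟨0, by decide⟩).mp (by decide)
      have d23 := (hiff ⟨3, by decide⟩ ⟨2, by decide⟩).mp (by decide)
      have d45 := (hiff ⟨5, by decide⟩ ⟨4, by decide⟩).mp (by decide)
      have v03 := (hiff ⟨0, by decide⟩ ⟨3, by decide⟩).mp (by decide)
      have v25 := (hiff ⟨2, by decide⟩ ⟨5, by decide⟩).mp (by decide)
      have e23 := fwd_key hs (hf (show (⟨2, by decide⟩ : Fin 6) < ⟨3, by decide⟩ by decide)) d23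
      by_cases h2 : ((f ⟨2, by decide⟩ : Fin n) : ℕ) < k
      · exact hL ⟨f ⟨0, by decide⟩, f ⟨1, by decide⟩, f ⟨2, by decide⟩, f ⟨3, by decide⟩,
          hf (by decide), hf (by decide), hf (by decide),
          lt_trans (Fin.lt_def.mp (hf (by decide))) h2,
          lt_trans (Fin.lt_def.mp (hf (by decide))) h2, h2, e23.mp h2,
          d01, v03, d23⟩
      · have hs3 : k ≤ ((f ⟨3, by decide⟩ : Fin n) : ℕ) :=
          le_trans (le_of_not_gt h2) (le_of_lt (Fin.lt_def.mp (hf (by decide))))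
        have hs4 : k ≤ ((f ⟨4, by decide⟩ : Fin n) : ℕ) :=
          le_trans (le_of_not_gt h2) (le_of_lt (Fin.lt_def.mp (hf (by decide))))
        have hs5 : k ≤ ((f ⟨5, by decide⟩ : Fin n) : ℕ) :=
          le_trans (le_of_not_gt h2) (le_of_lt (Fin.lt_def.mp (hf (by decide))))
        exact hR ⟨f ⟨2, by decide⟩, f ⟨3, by decide⟩, f ⟨4, by decide⟩, f ⟨5, by decide⟩,
          hf (by decide), hf (by decide), hf (by decide),
          le_of_not_gt h2, hs3, hs4, hs5, d23, v25, d45⟩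
  · -- backward direction
    intro H
    have h1 : ¬ containsPat w [2,4,1,5,3] := H _ (by simp)
    have h2 : ¬ containsPat w [2,5,1,4,3] := H _ (by simp)
    have h3 : ¬ containsPat w [3,1,5,2,4] := H _ (by simp)
    have h4 : ¬ containsPat w [3,1,5,4,2] := H _ (by simp)
    have h5 : ¬ containsPat w [3,2,5,1,4] := H _ (by simp)
    have h6 : ¬ containsPat w [3,2,5,4,1] := H _ (by simp)
    have h7 : ¬ containsPat w [4,2,1,5,3] := H _ (by simp)
    have h8 : ¬ containsPat w [5,2,1,4,3] := H _ (by simp)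
    have h9 : ¬ containsPat w [2,1,4,3,6,5] := H _ (by simp)
    by_cases hocc : ∃ a b c d : Fin n, Occ w a b c d
    · obtain ⟨q1, q2, q3, q4, hQ⟩ := hocc
      set S : Set ℕ := {m | ∃ a b c d : Fin n, Occ w a b c d ∧ (w d : ℕ) = m} with hS
      have hSne : S.Nonempty := ⟨(w q4 : ℕ), q1, q2, q3, q4, hQ, rfl⟩
      set k : ℕ := sInf S with hk
      obtain ⟨r1, r2, r3, r4, hR, hRk⟩ := Nat.sInf_mem hSne
      have hmin : ∀ a b c d : Fin n, Occ w a b c d → k ≤ (w d : ℕ) :=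
        fun a b c d ho => Nat.sInf_le ⟨a, b, c, d, ho, rfl⟩
      have hC2 : ∀ a : Fin n, (a : ℕ) < k → (w a : ℕ) < k :=
        fun a ha => lemC2 h1 h2 h3 h4 h5 h6 h7 h8 hmin r1 r2 r3 r4 hR hRk a ha
      refine ⟨k, ?_, ?_, ?_, ?_⟩
      · have := (w r4).isLt; omega
      · intro i j hi hj
        have hwi := hC2 i hi
        have hwj := splitvals k hC2 j hj
        exact Fin.lt_def.mpr (by omega)
      · rintro ⟨i1, i2, i3, i4, h12, h23, h34, P1, P2, P3, P4, hv1, hv2, hv3⟩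
        have ho : Occ w i1 i2 i3 i4 :=
          ⟨Fin.lt_def.mp h12, Fin.lt_def.mp h23, Fin.lt_def.mp h34,
           Fin.lt_def.mp hv1, Fin.lt_def.mp hv2, Fin.lt_def.mp hv3⟩
        have := hmin _ _ _ _ ho
        have := hC2 i4 P4
        omega
      · rintro ⟨i1, i2, i3, i4, h12, h23, h34, P1, P2, P3, P4, hv1, hv2, hv3⟩
        have ho : Occ w i1 i2 i3 i4 :=
          ⟨Fin.lt_def.mp h12, Fin.lt_def.mp h23, Fin.lt_def.mp h34,
           Fin.lt_def.mp hv1, Fin.lt_def.mp hv2, Fin.lt_def.mp hv3⟩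
        have hone := lemONE h1 h2 h3 h4 h5 h6 h7 h8 h9 i1 i2 i3 i4 r1 r2 r3 r4 ho hR
        have := splitvals k hC2 i1 P1
        omega
    · refine ⟨n, le_refl n, ?_, ?_, ?_⟩
      · intro i j _ hj
        exact absurd (lt_of_le_of_lt hj j.isLt) (lt_irrefl n)
      · rintro ⟨i1, i2, i3, i4, h12, h23, h34, _, _, _, _, hv1, hv2, hv3⟩
        exact hocc ⟨i1, i2, i3, i4,
          Fin.lt_def.mp h12, Fin.lt_def.mp h23, Fin.lt_def.mp h34,
          Fin.lt_def.mp hv1, Fin.lt_def.mp hv2, Fin.lt_def.mp hv3⟩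
      · rintro ⟨i1, i2, i3, i4, h12, h23, h34, _, _, _, _, hv1, hv2, hv3⟩
        exact hocc ⟨i1, i2, i3, i4,
          Fin.lt_def.mp h12, Fin.lt_def.mp h23, Fin.lt_def.mp h34,
          Fin.lt_def.mp hv1, Fin.lt_def.mp hv2, Fin.lt_def.mp hv3⟩
end

section
/- If $w \in \mathfrak{S}_n$ avoids the pattern $1324$, then $\#\overline{H_L(w)} \geq \#R_w$, i.e., the complement of the left hull of $w$ in $[n] \times [n]$ has at least as many cells as the Rothe diagram of $w$. -/
/-- The Rothe diagram of a permutation `w`. -/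
def rothe {n : ℕ} (w : Equiv.Perm (Fin n)) : Finset (Fin n × Fin n) :=
  Finset.univ.filter (fun p => p.2 < w p.1 ∧ p.1 < w⁻¹ p.2)

/-- The left hull of `w`: the union over all non-inversions `i < j`, `w i < w j`
of the rectangles `{(k,ℓ) : w i ≤ k ≤ w j, i ≤ ℓ ≤ j}`. -/
def leftHull {n : ℕ} (w : Equiv.Perm (Fin n)) : Finset (Fin n × Fin n) :=
  Finset.univ.filter (fun c => ∃ i j : Fin n, i < j ∧ w i < w j ∧
    w i ≤ c.1 ∧ c.1 ≤ w j ∧ i ≤ c.2 ∧ c.2 ≤ j)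

/-- `w` avoids the pattern `1324`. -/
def avoids1324 {n : ℕ} (w : Equiv.Perm (Fin n)) : Prop :=
  ¬ ∃ i₁ i₂ i₃ i₄ : Fin n, i₁ < i₂ ∧ i₂ < i₃ ∧ i₃ < i₄ ∧
      w i₁ < w i₃ ∧ w i₃ < w i₂ ∧ w i₂ < w i₄

/-!
A Rothe cell `(i, j)` (so `j < w i` and `i < w⁻¹ j`) is *left saturated* if every entry in
positions `≤ i` exceeds `j`, and *right saturated* if every entry in positions `≥ w⁻¹ j` is
below `w i`. A cell failing both would give a `1324` pattern `a < i < w⁻¹ j < b`, so for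
`1324`-avoiding `w` every Rothe cell is one of the two. Note that the hull is indexed by
(value, position). A left saturated cell `(i, j)` is sent to `(j, i)`, which no hull rectangle
reaches since every rectangle spanning position `i` starts at a value `w a > j`; a right
saturated one is sent to `(w i, w⁻¹ j)`, which no rectangle reaches since every rectangle
spanning position `w⁻¹ j` ends at a value `w b < w i`. The two rules are injective and their
images are disjoint, so this injects the Rothe diagram into the complement of the hull.
-/

section

variable {n : ℕ} (w : Equiv.Perm (Fin n))

lemma mem_rothe {p : Fin n × Fin n} : p ∈ rothe w ↔ p.2 < w p.1 ∧ p.1 < w⁻¹ p.2 := by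
  simp [rothe]

lemma notMem_leftHull_of_forall_le {k ℓ : Fin n} (h : ∀ a ≤ ℓ, k < w a) :
    (k, ℓ) ∉ leftHull w := by
  intro hmem
  obtain ⟨a, -, -, -, hak, -, haℓ, -⟩ := (Finset.mem_filter.mp hmem).2
  exact hak.not_gt (h a haℓ)

lemma notMem_leftHull_of_forall_ge {k ℓ : Fin n} (h : ∀ b ≥ ℓ, w b < k) :
    (k, ℓ) ∉ leftHull w := by
  intro hmem
  obtain ⟨-, b, -, -, -, hkb, -, hℓb⟩ := (Finset.mem_filter.mp hmem).2
  exact hkb.not_gt (h b hℓb)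

lemma forall_ge_lt_of_avoids1324 (hw : avoids1324 w) {i j : Fin n}
    (hij : (i, j) ∈ rothe w) (hleft : ¬ ∀ a ≤ i, j < w a) : ∀ b ≥ w⁻¹ j, w b < w i := by
  obtain ⟨hji, hiw⟩ : j < w i ∧ i < w⁻¹ j := (mem_rothe w).mp hij
  push Not at hleft
  obtain ⟨a, hai, hwa⟩ := hleft
  intro b hb
  by_contra! hwb
  set c := w⁻¹ j
  have hwc : w c = j := w.apply_symm_apply j
  have hai' : a < i := lt_of_le_of_ne hai (by rintro rfl; exact hwa.not_gt hji)
  have hwa' : w a < w c := hwc ▸ lt_of_le_of_ne hwa (fun h =>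
    (hiw.trans_le (w.injective (h.trans hwc.symm) ▸ hai)).false)
  have hcb : c < b := lt_of_le_of_ne hb (by rintro rfl; exact hwb.not_gt (hwc ▸ hji))
  have hwb' : w i < w b := lt_of_le_of_ne hwb (fun h => (hiw.trans hcb).ne (w.injective h))
  exact hw ⟨a, i, c, b, hai', hiw, hcb, hwa', hwc ▸ hji, hwb'⟩

lemma swap_ne_of_mem_rothe {p q : Fin n × Fin n} (hp : p ∈ rothe w) (hq : q ∈ rothe w) :
    p.swap ≠ (w q.1, w⁻¹ q.2) := by
  rw [mem_rothe] at hp hq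
  intro h
  obtain ⟨h₂, h₁⟩ := Prod.mk.inj h
  have hwp : w p.1 = q.2 := by rw [h₁]; exact w.apply_symm_apply q.2
  exact (hp.1.trans (hwp ▸ hq.1)).ne h₂

open Classical in
noncomputable def rotheToHullCompl (p : Fin n × Fin n) : Fin n × Fin n :=
  if ∀ a ≤ p.1, p.2 < w a then p.swap else (w p.1, w⁻¹ p.2)

lemma rotheToHullCompl_notMem_leftHull (hw : avoids1324 w) {p : Fin n × Fin n}
    (hp : p ∈ rothe w) : rotheToHullCompl w p ∉ leftHull w := by
  unfold rotheToHullCompl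
  split_ifs with hleft
  · exact notMem_leftHull_of_forall_le w hleft
  · exact notMem_leftHull_of_forall_ge w (forall_ge_lt_of_avoids1324 w hw hp hleft)

lemma rotheToHullCompl_injOn : Set.InjOn (rotheToHullCompl w) (rothe w) := by
  intro p hp q hq h
  unfold rotheToHullCompl at h
  split_ifs at h
  · exact Prod.swap_injective h
  · exact absurd h (swap_ne_of_mem_rothe w hp hq)
  · exact absurd h.symm (swap_ne_of_mem_rothe w hq hp)
  · simp only [Prod.mk.injEq, EmbeddingLike.apply_eq_iff_eq] at h
    exact Prod.ext h.1 h.2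

end

theorem stmt_15 {n : ℕ} (w : Equiv.Perm (Fin n)) (hw : avoids1324 w) :
    (rothe w).card ≤ ((Finset.univ : Finset (Fin n × Fin n)) \ leftHull w).card := by
  refine Finset.card_le_card_of_injOn (rotheToHullCompl w) (fun p hp => ?_)
    (rotheToHullCompl_injOn w)
  simpa using rotheToHullCompl_notMem_leftHull w hw hp
end

section
/- Let $q$ be a prime power and $S \subseteq [m] \times [n]$ a set containing no elements in row $m$. Then for any $r \geq 1$, the number $N_m(r)$ of $m \times n$ matrices over $\mathbf{F}_q$ of rank $r$ whose support avoids $S$ satisfies $N_m(r) = N_{m-1}(r) \cdot q^r + N_{m-1}(r-1) \cdot (q^n - q^{r-1})$, where $N_{m-1}(s)$ is the number of $(m-1) \times n$ matrices of rank $s$ over $\mathbf{F}_q$ whose support avoids $S$ (restricted to the first $m-1$ rows). -/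
/-!
Write an `(m + 1) × n` matrix as its first `m` rows `B` followed by a last row `v`. Since `S` does
not meet the last row, the matrix avoids `S` iff `B` does. Its rank is `rank B` when `v` lies in
the row space of `B` (`q ^ rank B` choices of `v`) and `rank B + 1` otherwise
(`q ^ n - q ^ rank B` choices), so counting by `B` gives the recursion.
-/

open Module Submodule

theorem Nat.card_subtype_prod_of_card_fiber {α β : Type*} [Finite α] [Finite β]
    (p : α → Prop) (Q : α → β → Prop) {c : ℕ} (hc : ∀ a, p a → Nat.card {b // Q a b} = c) :
    Nat.card {x : α × β // p x.1 ∧ Q x.1 x.2} = Nat.card {a // p a} * c := by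
  have := Fintype.ofFinite {a // p a}
  let e : {x : α × β // p x.1 ∧ Q x.1 x.2} ≃ Σ a : {a // p a}, {b // Q a b} :=
    { toFun x := ⟨⟨x.1.1, x.2.1⟩, ⟨x.1.2, x.2.2⟩⟩
      invFun y := ⟨(y.1.1, y.2.1), y.1.2, y.2.2⟩ }
  rw [Nat.card_congr e, Nat.card_sigma, Finset.sum_congr rfl fun a _ => hc a.1 a.2,
    Finset.sum_const, Finset.card_univ, smul_eq_mul, Nat.card_eq_fintype_card]

theorem Nat.card_subtype_or_of_disjoint {α : Type*} [Finite α] {p q : α → Prop}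
    (h : ∀ a, p a → ¬ q a) :
    Nat.card {a // p a ∨ q a} = Nat.card {a // p a} + Nat.card {a // q a} := by
  classical
  have := Fintype.ofFinite α
  simp only [Nat.card_eq_fintype_card]
  exact Fintype.card_subtype_or_disjoint p q fun _ hp hq a ha => h a (hp a ha) (hq a ha)

namespace Matrix

variable {F : Type*} [Field F] {m n : ℕ}

theorem rank_snoc_eq_finrank_span_insert (B : Matrix (Fin m) (Fin n) F) (v : Fin n → F) :
    Matrix.rank (Fin.snoc B v : Matrix (Fin (m + 1)) (Fin n) F) =
      finrank F (span F (insert v (Set.range B.row))) := by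
  rw [rank_eq_finrank_span_row (Fin.snoc B v : Matrix (Fin (m + 1)) (Fin n) F)]
  exact congrArg (fun s => finrank F (span F s)) (Fin.range_snoc B v)

theorem rank_snoc_of_mem (B : Matrix (Fin m) (Fin n) F) {v : Fin n → F}
    (hv : v ∈ span F (Set.range B.row)) :
    Matrix.rank (Fin.snoc B v : Matrix (Fin (m + 1)) (Fin n) F) = B.rank := by
  rw [rank_snoc_eq_finrank_span_insert, span_insert_eq_span hv, rank_eq_finrank_span_row]

theorem rank_snoc_of_notMem (B : Matrix (Fin m) (Fin n) F) {v : Fin n → F}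
    (hv : v ∉ span F (Set.range B.row)) :
    Matrix.rank (Fin.snoc B v : Matrix (Fin (m + 1)) (Fin n) F) = B.rank + 1 := by
  rw [rank_snoc_eq_finrank_span_insert, span_insert, sup_comm, rank_eq_finrank_span_row]
  exact finrank_sup_span_singleton hv

theorem rank_snoc_eq_iff (B : Matrix (Fin m) (Fin n) F) (v : Fin n → F) {r : ℕ} (hr : 1 ≤ r) :
    Matrix.rank (Fin.snoc B v : Matrix (Fin (m + 1)) (Fin n) F) = r ↔
      B.rank = r ∧ v ∈ span F (Set.range B.row) ∨
        B.rank = r - 1 ∧ v ∉ span F (Set.range B.row) := by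
  by_cases hv : v ∈ span F (Set.range B.row)
  · simp [rank_snoc_of_mem B hv, hv]
  · simp only [rank_snoc_of_notMem B hv, hv, and_false, not_false_eq_true, and_true, false_or]
    omega

theorem card_mem_span_range_row (B : Matrix (Fin m) (Fin n) F) :
    Nat.card {v // v ∈ span F (Set.range B.row)} = Nat.card F ^ B.rank := by
  rw [rank_eq_finrank_span_row]
  exact natCard_eq_pow_finrank

theorem card_notMem_span_range_row [Finite F] (B : Matrix (Fin m) (Fin n) F) :
    Nat.card {v // v ∉ span F (Set.range B.row)} = Nat.card F ^ n - Nat.card F ^ B.rank := by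
  classical
  have := Fintype.ofFinite F
  rw [← card_mem_span_range_row, Nat.card_eq_fintype_card, Fintype.card_subtype_compl,
    Nat.card_eq_fintype_card, Fintype.card_fun, Fintype.card_fin, Nat.card_eq_fintype_card]

end Matrix

theorem Fin.forall_snoc_eq_zero_iff {α : Type*} [Zero α] {m n : ℕ}
    {S : Set (Fin (m + 1) × Fin n)} (hS : ∀ p ∈ S, p.1 ≠ Fin.last m)
    (B : Fin m → Fin n → α) (v : Fin n → α) :
    (∀ p ∈ S, (Fin.snoc B v : Fin (m + 1) → Fin n → α) p.1 p.2 = 0) ↔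
      ∀ p ∈ S, ∀ i : Fin m, Fin.castSucc i = p.1 → B i p.2 = 0 := by
  constructor
  · rintro h p hp i hi
    simpa [← hi] using h p hp
  · intro h p hp
    obtain ⟨i, hi⟩ := Fin.exists_castSucc_eq.mpr (hS p hp)
    rw [← hi, Fin.snoc_castSucc]
    exact h p hp i hi

theorem stmt_19 (q m n r : ℕ) (hr : 1 ≤ r)
    (F : Type*) [Field F] [Fintype F] (hq : Fintype.card F = q)
    (S : Finset (Fin (m + 1) × Fin n))
    (hS : ∀ p ∈ S, p.1 ≠ Fin.last m) :
    Nat.card {A : Matrix (Fin (m + 1)) (Fin n) F //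
        A.rank = r ∧ ∀ p ∈ S, A p.1 p.2 = 0} =
    Nat.card {A : Matrix (Fin m) (Fin n) F //
        A.rank = r ∧ ∀ p ∈ S, ∀ i : Fin m, Fin.castSucc i = p.1 → A i p.2 = 0}
      * q ^ r +
    Nat.card {A : Matrix (Fin m) (Fin n) F //
        A.rank = r - 1 ∧ ∀ p ∈ S, ∀ i : Fin m, Fin.castSucc i = p.1 → A i p.2 = 0}
      * (q ^ n - q ^ (r - 1)) := by
  set avoids : Matrix (Fin m) (Fin n) F → Prop :=
    fun B => ∀ p ∈ S, ∀ i : Fin m, Fin.castSucc i = p.1 → B i p.2 = 0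
  let W (B : Matrix (Fin m) (Fin n) F) := span F (Set.range B.row)
  let appendRow : Matrix (Fin m) (Fin n) F × (Fin n → F) ≃ Matrix (Fin (m + 1)) (Fin n) F :=
    (Equiv.prodComm _ _).trans (Fin.snocEquiv fun _ => Fin n → F)
  have happend : ∀ x, ((x.1.rank = r ∧ avoids x.1) ∧ x.2 ∈ W x.1 ∨
      (x.1.rank = r - 1 ∧ avoids x.1) ∧ x.2 ∉ W x.1) ↔
      (appendRow x).rank = r ∧ ∀ p ∈ S, appendRow x p.1 p.2 = 0 := by
    rintro ⟨B, v⟩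
    refine Iff.trans ?_
      (and_congr (Matrix.rank_snoc_eq_iff B v hr) (Fin.forall_snoc_eq_zero_iff hS B v)).symm
    tauto
  rw [← Nat.card_congr (appendRow.subtypeEquiv happend),
    Nat.card_subtype_or_of_disjoint fun x h h' => h'.2 h.2,
    Nat.card_subtype_prod_of_card_fiber (fun B => B.rank = r ∧ avoids B) (fun B v => v ∈ W B)
      fun B hB => by rw [Matrix.card_mem_span_range_row, hB.1],
    Nat.card_subtype_prod_of_card_fiber (fun B => B.rank = r - 1 ∧ avoids B) (fun B v => v ∉ W B)
      fun B hB => by rw [Matrix.card_notMem_span_range_row, hB.1],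
    Nat.card_eq_fintype_card (α := F), hq]
end
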